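/- Let D be a digraph and u,v,w ∈ V(D) pairwise distinct with v,w ∈ N⁺(u) ∩ N⁻(u) (i.e., both {u,v} and {u,w} induce digons). Let D* be obtained from D by deleting v and w and adding, for every x ∈ V(D) \ {u,v,w}: the arc (u,x) whenever x has an in-neighbor in {v,w}, and the arc (x,u) whenever x has an out-neighbor in {v,w}. Let F be an orientation of a cubic graph. If D* contains a subdivision of F, then so does D. -/

import Mathlib

/-- A digraph on a vertex type `V`: a set of arcs given by an adjacency relation. -/
structure Digraph' (V : Type) where
  Adj : V → V → Prop

namespace Digraph'

variable {V : Type}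

/-- A digraph is loopless if it has no arc from a vertex to itself. -/
def Loopless (D : Digraph' V) : Prop := ∀ v, ¬ D.Adj v v

/-- A set `S` of vertices is acyclic in `D` if the subdigraph induced by `S`
contains no directed cycle (equivalently, no vertex can reach itself by a
nontrivial directed walk staying inside `S`). -/
def AcyclicOn (D : Digraph' V) (S : Set V) : Prop :=
  ∀ v, ¬ Relation.TransGen (fun x y => x ∈ S ∧ y ∈ S ∧ D.Adj x y) v v

/-- An acyclic coloring of `D` with `k` colors: every color class induces an
acyclic subdigraph. -/
def IsAcyclicColoring (D : Digraph' V) {k : ℕ} (c : V → Fin k) : Prop :=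
  ∀ i : Fin k, D.AcyclicOn {v | c v = i}

/-- The dichromatic number of `D`: the least `k` such that `D` admits an
acyclic coloring with `k` colors. -/
noncomputable def dichromaticNumber (D : Digraph' V) : ℕ :=
  sInf {k : ℕ | ∃ c : V → Fin k, D.IsAcyclicColoring c}

/-- `D.IsDipath u l v`: the list `u :: l ++ [v]` is a directed path in `D`
from `u` to `v`, with (pairwise distinct) internal vertices `l`. -/
def IsDipath (D : Digraph' V) (u : V) (l : List V) (v : V) : Prop :=
  (u :: l ++ [v]).Chain' D.Adj ∧ (u :: l ++ [v]).Nodup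

/-- `D.ContainsSubdivision F`: some subdigraph of `D` is a subdivision of `F`.
Concretely, there is an injective map `β` of the vertices of `F` into `D`
(the branch vertices), and for every arc `(a,b)` of `F` a directed path in
`D` from `β a` to `β b`, such that the internal vertices of these paths avoid
all branch vertices and the paths of distinct arcs are internally disjoint. -/
def ContainsSubdivision {α : Type} (D : Digraph' V) (F : Digraph' α) : Prop :=
  ∃ (β : α → V) (p : ∀ a b, F.Adj a b → List V),
    Function.Injective β ∧
    (∀ a b (h : F.Adj a b), D.IsDipath (β a) (p a b h) (β b)) ∧
    (∀ a b (h : F.Adj a b) (x : V), x ∈ p a b h → x ∉ Set.range β) ∧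
    (∀ a b (h : F.Adj a b) (a' b' : α) (h' : F.Adj a' b'),
      (a, b) ≠ (a', b') → ∀ x, x ∈ p a b h → x ∉ p a' b' h')

/-- `MaderBound F k`: every (finite, loopless) digraph with dichromatic number
at least `k` contains a subdivision of `F`. -/
def MaderBound {α : Type} (F : Digraph' α) (k : ℕ) : Prop :=
  ∀ (n : ℕ) (D : Digraph' (Fin n)), D.Loopless →
    k ≤ D.dichromaticNumber → D.ContainsSubdivision F

/-- The dichromatic Mader number of `F`: the smallest integer `k ≥ 1` such that
every digraph with dichromatic number at least `k` contains a subdivision of `F`. -/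
noncomputable def mader {α : Type} (F : Digraph' α) : ℕ :=
  sInf {k : ℕ | 1 ≤ k ∧ MaderBound F k}

/-- A digraph is strongly connected if every vertex can reach every other
vertex by a directed path. -/
def StronglyConnected (D : Digraph' V) : Prop :=
  ∀ x y : V, Relation.ReflTransGen D.Adj x y

/-- The subdigraph of `D` induced by a set `S` of vertices. -/
def induce (D : Digraph' V) (S : Set V) : Digraph' S :=
  ⟨fun a b => D.Adj a.1 b.1⟩

end Digraph'

/-- `D` is an orientation of the undirected simple graph `G`: the arcs of `D`
are obtained by choosing exactly one direction for each edge of `G`. -/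
def IsOrientationOf {γ : Type} (D : Digraph' γ) (G : SimpleGraph γ) : Prop :=
  (∀ a b, D.Adj a b → G.Adj a b) ∧
  (∀ a b, G.Adj a b → ((D.Adj a b ∨ D.Adj b a) ∧ ¬ (D.Adj a b ∧ D.Adj b a)))


/-- `F` is an orientation of a cubic (3-regular) undirected graph: `F` is
loopless, has no digons, and every vertex has exactly `3` neighbors in the
underlying graph. -/
def IsCubicOrientation {γ : Type} [Fintype γ] (F : Digraph' γ) : Prop :=
  F.Loopless ∧ (∀ a b, ¬ (F.Adj a b ∧ F.Adj b a)) ∧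
  ∀ v, ({w | F.Adj v w} ∪ {w | F.Adj w v}).ncard = 3

namespace DigonAux

inductive Trip : Type | tu | tv | tw
deriving DecidableEq

instance : Fintype Trip := ⟨{Trip.tu, Trip.tv, Trip.tw}, fun x => by cases x <;> simp⟩

open Trip

def costO : Trip → Trip → List Trip := fun b m =>
  if m = b then [] else if b = tu then [m] else if m = tu then [tu] else [tu, m]

def costI (b m : Trip) : List Trip := (costO b m).reverse

def DisjC (b m₁ m₂ : Trip) : Prop := ∀ t ∈ costO b m₁, t ∉ costO b m₂

instance : ∀ b m₁ m₂, Decidable (DisjC b m₁ m₂) := fun _ _ _ =>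
  List.decidableBAll _ _

theorem feas3 : ∀ S₁ S₂ S₃ : Trip → Bool, (∃ m, S₁ m = true) → (∃ m, S₂ m = true) →
    (∃ m, S₃ m = true) →
    ∃ b m₁ m₂ m₃, S₁ m₁ = true ∧ S₂ m₂ = true ∧ S₃ m₃ = true ∧
      DisjC b m₁ m₂ ∧ DisjC b m₁ m₃ ∧ DisjC b m₂ m₃ := by decide

theorem feas2 : ∀ S₁ S₂ : Trip → Bool, (∃ m, S₁ m = true) → (∃ m, S₂ m = true) →
    ∃ b m₁ m₂, S₁ m₁ = true ∧ S₂ m₂ = true ∧ DisjC b m₁ m₂ := by decide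

theorem disjC_symm : ∀ b m₁ m₂, DisjC b m₁ m₂ → DisjC b m₂ m₁ := by decide

theorem costO_nodup : ∀ b m, (costO b m).Nodup := by decide
theorem costO_not_self : ∀ b m, b ∉ costO b m := by decide
theorem segOut_nodup : ∀ b m, (b :: costO b m).Nodup := by decide
theorem segIn_nodup : ∀ b m, (costI b m ++ [b]).Nodup := by decide
theorem mid_nodup : ∀ b m₁ m₂, DisjC b m₁ m₂ →
    (costI b m₁ ++ b :: costO b m₂).Nodup := by decide
theorem segOut_getLast? : ∀ b m, (b :: costO b m).getLast? = some m := by decide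
theorem segIn_head? : ∀ b m, (costI b m ++ [b]).head? = some m := by decide
theorem mid_head? : ∀ b m₁ m₂, (costI b m₁ ++ b :: costO b m₂).head? = some m₁ := by decide
theorem mid_getLast? : ∀ b m₁ m₂, (costI b m₁ ++ b :: costO b m₂).getLast? = some m₂ := by decide

variable {V : Type} (D : Digraph' V) (u v w : V)

def vtx : Trip → V | tu => u | tv => v | tw => w

theorem vtx_inj (huv : u ≠ v) (huw : u ≠ w) (hvw : v ≠ w) :
    Function.Injective (vtx u v w) := by
  intro a b h; cases a <;> cases b <;> simp_all [vtx]

theorem vtx_cases (t : Trip) : vtx u v w t = u ∨ vtx u v w t = v ∨ vtx u v w t = w := by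
  cases t <;> simp [vtx]

theorem segOut_chain (h₁ : D.Adj u v) (h₃ : D.Adj u w) (h₂ : D.Adj v u) (h₄ : D.Adj w u)
    (b m : Trip) : List.Chain' D.Adj ((b :: costO b m).map (vtx u v w)) := by
  cases b <;> cases m <;> simp [List.Chain', costO, vtx, h₁, h₂, h₃, h₄]

theorem segIn_chain (h₁ : D.Adj u v) (h₃ : D.Adj u w) (h₂ : D.Adj v u) (h₄ : D.Adj w u)
    (b m : Trip) : List.Chain' D.Adj ((costI b m ++ [b]).map (vtx u v w)) := by
  cases b <;> cases m <;> simp [List.Chain', costO, costI, vtx, h₁, h₂, h₃, h₄]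

theorem mid_chain (h₁ : D.Adj u v) (h₃ : D.Adj u w) (h₂ : D.Adj v u) (h₄ : D.Adj w u)
    (b m₁ m₂ : Trip) :
    List.Chain' D.Adj ((costI b m₁ ++ b :: costO b m₂).map (vtx u v w)) := by
  cases b <;> cases m₁ <;> cases m₂ <;> simp [List.Chain', costO, costI, vtx, h₁, h₂, h₃, h₄]

theorem chain'_mono_mem {α : Type} {R S : α → α → Prop} :
    ∀ {l : List α}, l.Chain' R → (∀ a ∈ l, ∀ b ∈ l, R a b → S a b) → l.Chain' S := by
  intro l
  induction l with
  | nil => simp [List.Chain']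
  | cons x t ih =>
    intro h H
    unfold List.Chain' at h ⊢
    rw [List.isChain_cons] at h ⊢
    exact ⟨fun y hy => H x (by simp) y
        (List.mem_cons_of_mem _ (List.mem_of_mem_head? hy)) (h.1 y hy),
      ih h.2 fun a ha b hb => H a (List.mem_cons_of_mem _ ha) b (List.mem_cons_of_mem _ hb)⟩

end DigonAux
/-- Suppose `{u,v}` and `{u,w}` induce digons in `D`, and let
`D*` be obtained from `D` by deleting `v` and `w` and adding, for every other
vertex `x`, the arc `(u,x)` whenever `x` has an in-neighbor in `{v,w}` and the
arc `(x,u)` whenever `x` has an out-neighbor in `{v,w}`. If `F` is an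
orientation of a cubic graph and `D*` contains a subdivision of `F`, then so
does `D`. -/
theorem digon_contraction {V γ : Type} [Fintype γ] (D : Digraph' V)
    (hD : D.Loopless) (u v w : V) (huv : u ≠ v) (huw : u ≠ w) (hvw : v ≠ w)
    (h₁ : D.Adj u v) (h₂ : D.Adj v u) (h₃ : D.Adj u w) (h₄ : D.Adj w u)
    (F : Digraph' γ) (hF : IsCubicOrientation F)
    (hsub : Digraph'.ContainsSubdivision
      (⟨fun a b => D.Adj a.1 b.1
          ∨ (a.1 = u ∧ b.1 ≠ u ∧ (D.Adj v b.1 ∨ D.Adj w b.1))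
          ∨ (b.1 = u ∧ a.1 ≠ u ∧ (D.Adj a.1 v ∨ D.Adj a.1 w))⟩ :
        Digraph' {x : V // x ≠ v ∧ x ≠ w}) F) :
    D.ContainsSubdivision F := by
  classical
  obtain ⟨hFl, hFd, hFdeg⟩ := hF
  obtain ⟨β, p, hβinj, hpath, hav, hdisj⟩ := hsub
  have hvtxinj : Function.Injective (DigonAux.vtx u v w) := DigonAux.vtx_inj u v w huv huw hvw
  have hval : ∀ x y : {x : V // x ≠ v ∧ x ≠ w}, x.1 = y.1 → x = y := fun x y hxy => Subtype.ext hxy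
  have hchain : ∀ a b (h : F.Adj a b), (β a :: p a b h ++ [β b]).Chain'
      (fun x y : {x : V // x ≠ v ∧ x ≠ w} => D.Adj x.1 y.1
          ∨ (x.1 = u ∧ y.1 ≠ u ∧ (D.Adj v y.1 ∨ D.Adj w y.1))
          ∨ (y.1 = u ∧ x.1 ≠ u ∧ (D.Adj x.1 v ∨ D.Adj x.1 w))) := fun a b h => (hpath a b h).1
  have hnd : ∀ a b (h : F.Adj a b), (β a :: p a b h ++ [β b]).Nodup := fun a b h => (hpath a b h).2
  have hDchain : ∀ l : List {x : V // x ≠ v ∧ x ≠ w},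
      l.Chain' (fun x y => D.Adj x.1 y.1
          ∨ (x.1 = u ∧ y.1 ≠ u ∧ (D.Adj v y.1 ∨ D.Adj w y.1))
          ∨ (y.1 = u ∧ x.1 ≠ u ∧ (D.Adj x.1 v ∨ D.Adj x.1 w))) →
      (∀ z ∈ l, z.1 ≠ u) → (l.map Subtype.val).Chain' D.Adj := by
    intro l hc hz
    refine (List.isChain_map _).2 (DigonAux.chain'_mono_mem hc ?_)
    rintro a ha b hb (hab | ⟨ha', _⟩ | ⟨hb', _⟩)
    · exact hab
    · exact absurd ha' (hz a ha)
    · exact absurd hb' (hz b hb)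
  by_cases hbr : ∃ a, (β a).1 = u
  · -- u is a branch vertex β a₀
    obtain ⟨a₀, ha₀⟩ := hbr
    have hne : ∀ c, c ≠ a₀ → (β c).1 ≠ u := by
      intro c hc hcu
      exact hc (hβinj (hval _ _ (hcu.trans ha₀.symm)))
    have hint : ∀ a b (h : F.Adj a b), ∀ z ∈ p a b h, z.1 ≠ u := by
      intro a b h z hz hzu
      exact hav a b h z hz ⟨a₀, hval _ _ (ha₀.trans hzu.symm)⟩
    have houtne : ∀ c (h : F.Adj a₀ c), ∀ z ∈ p a₀ c h ++ [β c], z.1 ≠ u := by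
      intro c h z hz
      rcases List.mem_append.1 hz with hz | hz
      · exact hint _ _ h z hz
      · rw [List.mem_singleton] at hz
        subst hz
        exact hne c (fun hc => hFl a₀ (hc ▸ h))
    have hinne : ∀ c (h : F.Adj c a₀), ∀ z ∈ β c :: p c a₀ h, z.1 ≠ u := by
      intro c h z hz
      rcases List.mem_cons.1 hz with hz | hz
      · subst hz
        exact hne c (fun hc => hFl a₀ (hc ▸ h))
      · exact hint _ _ h z hz
    set Pcap : γ → DigonAux.Trip → Prop := fun c t =>
      (∀ h : F.Adj a₀ c, ∀ z, (p a₀ c h ++ [β c]).head? = some z →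
          D.Adj (DigonAux.vtx u v w t) z.1) ∧
      (∀ h : F.Adj c a₀, ∀ z, (β c :: p c a₀ h).getLast? = some z →
          D.Adj z.1 (DigonAux.vtx u v w t)) with hPcap
    have hcapNE : ∀ c, ∃ t, Pcap c t := by
      intro c
      by_cases hO : F.Adj a₀ c
      · have hnotI : ¬ F.Adj c a₀ := fun hI => hFd a₀ c ⟨hO, hI⟩
        have hnn : (p a₀ c hO ++ [β c]) ≠ [] := by simp
        have hh : (p a₀ c hO ++ [β c]).head? = some ((p a₀ c hO ++ [β c]).head hnn) :=
          List.head?_eq_head _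
        have hstep := (List.isChain_cons.1 (hchain a₀ c hO)).1 _ hh
        have hnu : ((p a₀ c hO ++ [β c]).head hnn).1 ≠ u :=
          houtne c hO _ (List.head_mem _)
        have hcap : ∃ t, D.Adj (DigonAux.vtx u v w t)
            ((p a₀ c hO ++ [β c]).head hnn).1 := by
          rcases hstep with hd | ⟨_, _, hd | hd⟩ | ⟨hu', _, _⟩
          · exact ⟨DigonAux.Trip.tu,
              by rw [show DigonAux.vtx u v w DigonAux.Trip.tu = u from rfl, ← ha₀]; exact hd⟩
          · exact ⟨DigonAux.Trip.tv, hd⟩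
          · exact ⟨DigonAux.Trip.tw, hd⟩
          · exact absurd hu' hnu
        obtain ⟨t, ht⟩ := hcap
        refine ⟨t, ?_⟩
        rw [hPcap]
        refine ⟨?_, fun hI => absurd hI hnotI⟩
        intro h z hz
        have hzz : z = (p a₀ c hO ++ [β c]).head hnn := by
          rw [hh] at hz
          exact (Option.some.inj hz).symm
        rw [hzz]
        exact ht
      · by_cases hI : F.Adj c a₀
        · have hnn : (β c :: p c a₀ hI) ≠ [] := by simp
          have hh : (β c :: p c a₀ hI).getLast? = some ((β c :: p c a₀ hI).getLast hnn) :=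
            List.getLast?_eq_getLast _
          have hsh : (β c :: p c a₀ hI ++ [β a₀]) = (β c :: p c a₀ hI) ++ [β a₀] := by simp
          have hch := hchain c a₀ hI
          rw [hsh] at hch
          have hstep := (List.isChain_append.1 hch).2.2 _ hh (β a₀) rfl
          have hnu : ((β c :: p c a₀ hI).getLast hnn).1 ≠ u :=
            hinne c hI _ (List.getLast_mem _)
          have hcap : ∃ t, D.Adj ((β c :: p c a₀ hI).getLast hnn).1
              (DigonAux.vtx u v w t) := by
            rcases hstep with hd | ⟨hu', _, _⟩ | ⟨_, _, hd | hd⟩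
            · exact ⟨DigonAux.Trip.tu,
                by rw [show DigonAux.vtx u v w DigonAux.Trip.tu = u from rfl, ← ha₀]; exact hd⟩
            · exact absurd hu' hnu
            · exact ⟨DigonAux.Trip.tv, hd⟩
            · exact ⟨DigonAux.Trip.tw, hd⟩
          obtain ⟨t, ht⟩ := hcap
          refine ⟨t, ?_⟩
          rw [hPcap]
          refine ⟨fun hO' => absurd hO' hO, ?_⟩
          intro h z hz
          have hzz : z = (β c :: p c a₀ hI).getLast hnn := by
            rw [hh] at hz
            exact (Option.some.inj hz).symm
          rw [hzz]
          exact ht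
        · refine ⟨DigonAux.Trip.tu, ?_⟩
          rw [hPcap]
          exact ⟨fun hO' => absurd hO' hO, fun hI' => absurd hI' hI⟩
    obtain ⟨bb₁, bb₂, bb₃, h12, h13, h23, hNS⟩ := Set.ncard_eq_three.1 (hFdeg a₀)
    obtain ⟨br, m₁, m₂, m₃, hm1, hm2, hm3, hd12, hd13, hd23⟩ :=
      DigonAux.feas3 (fun t => decide (Pcap bb₁ t)) (fun t => decide (Pcap bb₂ t))
        (fun t => decide (Pcap bb₃ t))
        (let ⟨t, ht⟩ := hcapNE bb₁; ⟨t, decide_eq_true ht⟩)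
        (let ⟨t, ht⟩ := hcapNE bb₂; ⟨t, decide_eq_true ht⟩)
        (let ⟨t, ht⟩ := hcapNE bb₃; ⟨t, decide_eq_true ht⟩)
    set mode : γ → DigonAux.Trip := fun c => if c = bb₁ then m₁ else if c = bb₂ then m₂ else m₃
      with hmodedef
    have hmval1 : mode bb₁ = m₁ := by simp [hmodedef]
    have hmval2 : mode bb₂ = m₂ := by simp [hmodedef, Ne.symm h12]
    have hmval3 : mode bb₃ = m₃ := by simp [hmodedef, Ne.symm h13, Ne.symm h23]
    have hmode : ∀ c, c ∈ ({w' | F.Adj a₀ w'} ∪ {w' | F.Adj w' a₀} : Set γ) → Pcap c (mode c) := by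
      intro c hc
      rw [hNS] at hc
      simp only [Set.mem_insert_iff, Set.mem_singleton_iff] at hc
      rcases hc with rfl | rfl | rfl
      · rw [hmval1]; exact of_decide_eq_true hm1
      · rw [hmval2]; exact of_decide_eq_true hm2
      · rw [hmval3]; exact of_decide_eq_true hm3
    have hmdisj : ∀ c c', c ∈ ({w' | F.Adj a₀ w'} ∪ {w' | F.Adj w' a₀} : Set γ) →
        c' ∈ ({w' | F.Adj a₀ w'} ∪ {w' | F.Adj w' a₀} : Set γ) → c ≠ c' →
        DigonAux.DisjC br (mode c) (mode c') := by
      intro c c' hc hc' hcc'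
      rw [hNS] at hc hc'
      simp only [Set.mem_insert_iff, Set.mem_singleton_iff] at hc hc'
      rcases hc with rfl | rfl | rfl <;> rcases hc' with rfl | rfl | rfl
      · exact absurd rfl hcc'
      · rw [hmval1, hmval2]; exact hd12
      · rw [hmval1, hmval3]; exact hd13
      · rw [hmval2, hmval1]; exact DigonAux.disjC_symm _ _ _ hd12
      · exact absurd rfl hcc'
      · rw [hmval2, hmval3]; exact hd23
      · rw [hmval3, hmval1]; exact DigonAux.disjC_symm _ _ _ hd13
      · rw [hmval3, hmval2]; exact DigonAux.disjC_symm _ _ _ hd23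
      · exact absurd rfl hcc'
    have hmemO : ∀ c, F.Adj a₀ c → c ∈ ({w' | F.Adj a₀ w'} ∪ {w' | F.Adj w' a₀} : Set γ) :=
      fun c h => Or.inl h
    have hmemI : ∀ c, F.Adj c a₀ → c ∈ ({w' | F.Adj a₀ w'} ∪ {w' | F.Adj w' a₀} : Set γ) :=
      fun c h => Or.inr h
    set B0 : V := DigonAux.vtx u v w br with hB0
    set β' : γ → V := Function.update (fun a => (β a).1) a₀ B0 with hβ'def
    have hβ'a₀ : β' a₀ = B0 := by rw [hβ'def]; simp
    have hβ'ne : ∀ a, a ≠ a₀ → β' a = (β a).1 := by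
      intro a ha
      rw [hβ'def]
      simp [Function.update_of_ne ha]
    have hβ'nu : ∀ zv : {x : V // x ≠ v ∧ x ≠ w}, zv.1 ≠ u → zv ∉ Set.range β →
        zv.1 ∉ Set.range β' := by
      rintro zv hzu hzr ⟨c, hc⟩
      by_cases hca : c = a₀
      · subst hca
        rw [hβ'a₀] at hc
        rcases DigonAux.vtx_cases u v w br with hbv | hbv | hbv
        · exact hzu (hc.symm.trans (hB0.trans hbv))
        · exact zv.2.1 (hc.symm.trans (hB0.trans hbv))
        · exact zv.2.2 (hc.symm.trans (hB0.trans hbv))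
      · rw [hβ'ne c hca] at hc
        exact hzr ⟨c, hval _ _ hc⟩
    have htripβ' : ∀ t : DigonAux.Trip, t ≠ br → DigonAux.vtx u v w t ∉ Set.range β' := by
      rintro t ht ⟨c, hc⟩
      by_cases hca : c = a₀
      · subst hca
        rw [hβ'a₀, hB0] at hc
        exact ht (hvtxinj hc).symm
      · rw [hβ'ne c hca] at hc
        rcases DigonAux.vtx_cases u v w t with hh | hh | hh
        · exact hne c hca (hc.trans hh)
        · exact (β c).2.1 (hc.trans hh)
        · exact (β c).2.2 (hc.trans hh)
    have hsep : ∀ (L : List DigonAux.Trip) (l : List {x : V // x ≠ v ∧ x ≠ w}),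
        (∀ z ∈ l, z.1 ≠ u) →
        ∀ x ∈ L.map (DigonAux.vtx u v w), x ∉ l.map Subtype.val := by
      intro L l hl x hx hx'
      obtain ⟨t, _, rfl⟩ := List.mem_map.1 hx
      obtain ⟨z, hz, hzx⟩ := List.mem_map.1 hx'
      rcases DigonAux.vtx_cases u v w t with hh | hh | hh
      · exact hl z hz (hzx.trans hh)
      · exact z.2.1 (hzx.trans hh)
      · exact z.2.2 (hzx.trans hh)
    refine ⟨β', fun a b h =>
        if a = a₀ then
          (DigonAux.costO br (mode b)).map (DigonAux.vtx u v w) ++ (p a b h).map Subtype.val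
        else if b = a₀ then
          (p a b h).map Subtype.val ++ (DigonAux.costI br (mode a)).map (DigonAux.vtx u v w)
        else (p a b h).map Subtype.val, ?_, ?_, ?_, ?_⟩
    · -- injectivity
      intro a a' he
      by_cases ha : a = a₀ <;> by_cases ha' : a' = a₀
      · rw [ha, ha']
      · exfalso
        rw [ha, hβ'a₀, hβ'ne a' ha'] at he
        rcases DigonAux.vtx_cases u v w br with hh | hh | hh
        · exact hne a' ha' (he.symm.trans (hB0.trans hh))
        · exact (β a').2.1 (he.symm.trans (hB0.trans hh))
        · exact (β a').2.2 (he.symm.trans (hB0.trans hh))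
      · exfalso
        rw [ha', hβ'a₀, hβ'ne a ha] at he
        rcases DigonAux.vtx_cases u v w br with hh | hh | hh
        · exact hne a ha (he.trans (hB0.trans hh))
        · exact (β a).2.1 (he.trans (hB0.trans hh))
        · exact (β a).2.2 (he.trans (hB0.trans hh))
      · rw [hβ'ne a ha, hβ'ne a' ha'] at he
        exact hβinj (hval _ _ he)
    · -- dipaths
      intro a b h
      dsimp only
      by_cases hA : a = a₀
      · subst hA
        -- now `a` plays the role of a₀
        rw [if_pos rfl]
        have hb0 : b ≠ a := fun hb => hFl a (hb ▸ h)
        have hLeq : (β' a :: ((DigonAux.costO br (mode b)).map (DigonAux.vtx u v w) ++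
              (p a b h).map Subtype.val) ++ [β' b])
            = ((br :: DigonAux.costO br (mode b)).map (DigonAux.vtx u v w)) ++
              ((p a b h ++ [β b]).map Subtype.val) := by
          rw [hβ'a₀, hβ'ne b hb0, hB0]
          simp
        constructor
        · rw [hLeq]
          refine List.IsChain.append (DigonAux.segOut_chain D u v w h₁ h₃ h₂ h₄ br (mode b))
            (hDchain _ (List.IsChain.tail (hchain a b h)) (houtne b h)) ?_
          intro x hx y hy
          rw [List.getLast?_map, DigonAux.segOut_getLast? br (mode b)] at hx
          simp only [Option.map_some, Option.mem_def, Option.some.injEq] at hx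
          subst hx
          rw [List.head?_map] at hy
          have hnn : (p a b h ++ [β b]) ≠ [] := by simp
          rw [List.head?_eq_head hnn] at hy
          simp only [Option.map_some, Option.mem_def, Option.some.injEq] at hy
          subst hy
          have hPb := hmode b (hmemO b h)
          rw [hPcap] at hPb
          exact hPb.1 h _ (List.head?_eq_head hnn)
        · rw [hLeq]
          refine List.Nodup.append
            (List.Nodup.map hvtxinj (DigonAux.segOut_nodup br (mode b)))
            (List.Nodup.map Subtype.val_injective (hnd a b h).of_cons)
            (hsep _ _ (houtne b h))
      · rw [if_neg hA]
        by_cases hB : b = a₀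
        · subst hB
          rw [if_pos rfl]
          have hLeq : (β' a :: ((p a b h).map Subtype.val ++
                (DigonAux.costI br (mode a)).map (DigonAux.vtx u v w)) ++ [β' b])
              = ((β a :: p a b h).map Subtype.val) ++
                ((DigonAux.costI br (mode a) ++ [br]).map (DigonAux.vtx u v w)) := by
            rw [hβ'a₀, hβ'ne a hA, hB0]
            simp
          have hpre : (β a :: p a b h).Chain'
              (fun x y : {x : V // x ≠ v ∧ x ≠ w} => D.Adj x.1 y.1
                ∨ (x.1 = u ∧ y.1 ≠ u ∧ (D.Adj v y.1 ∨ D.Adj w y.1))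
                ∨ (y.1 = u ∧ x.1 ≠ u ∧ (D.Adj x.1 v ∨ D.Adj x.1 w))) := by
            have hc := hchain a b h
            have hsh : (β a :: p a b h ++ [β b]) = (β a :: p a b h) ++ [β b] := by simp
            rw [hsh] at hc
            exact List.IsChain.left_of_append hc
          have hprend : (β a :: p a b h).Nodup := by
            have hc := hnd a b h
            have hsh : (β a :: p a b h ++ [β b]) = (β a :: p a b h) ++ [β b] := by simp
            rw [hsh] at hc
            exact (List.nodup_append.1 hc).1
          constructor
          · rw [hLeq]
            refine List.IsChain.append (hDchain _ hpre (hinne a h))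
              (DigonAux.segIn_chain D u v w h₁ h₃ h₂ h₄ br (mode a)) ?_
            intro x hx y hy
            rw [List.head?_map, DigonAux.segIn_head? br (mode a)] at hy
            simp only [Option.map_some, Option.mem_def, Option.some.injEq] at hy
            subst hy
            rw [List.getLast?_map] at hx
            have hnn : (β a :: p a b h) ≠ [] := by simp
            rw [List.getLast?_eq_getLast hnn] at hx
            simp only [Option.map_some, Option.mem_def, Option.some.injEq] at hx
            subst hx
            have hPa := hmode a (hmemI a h)
            rw [hPcap] at hPa
            exact hPa.2 h _ (List.getLast?_eq_getLast hnn)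
          · rw [hLeq]
            refine List.Nodup.append
              (List.Nodup.map Subtype.val_injective hprend)
              (List.Nodup.map hvtxinj (DigonAux.segIn_nodup br (mode a)))
              (List.Disjoint.symm (hsep _ _ (hinne a h)))
        · rw [if_neg hB]
          have hall : ∀ z ∈ β a :: p a b h ++ [β b], z.1 ≠ u := by
            intro z hz
            rcases List.mem_cons.1 hz with rfl | hz
            · exact hne a hA
            · rcases List.mem_append.1 hz with hz | hz
              · exact hint a b h z hz
              · rw [List.mem_singleton] at hz
                subst hz
                exact hne b hB
          constructor
          · have hc := hDchain _ (hchain a b h) hall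
            rw [hβ'ne a hA, hβ'ne b hB]
            simpa using hc
          · have hc := List.Nodup.map Subtype.val_injective (hnd a b h)
            rw [hβ'ne a hA, hβ'ne b hB]
            simpa using hc
    · -- internal vertices avoid branch vertices
      intro a b h x hx
      dsimp only at hx
      by_cases hA : a = a₀
      · rw [if_pos hA] at hx
        rcases List.mem_append.1 hx with hx | hx
        · obtain ⟨t, ht, rfl⟩ := List.mem_map.1 hx
          exact htripβ' t (fun he => DigonAux.costO_not_self br (mode b) (he ▸ ht))
        · obtain ⟨z, hz, rfl⟩ := List.mem_map.1 hx
          exact hβ'nu z (hint _ _ h z hz) (hav _ _ h z hz)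
      · rw [if_neg hA] at hx
        by_cases hB : b = a₀
        · rw [if_pos hB] at hx
          rcases List.mem_append.1 hx with hx | hx
          · obtain ⟨z, hz, rfl⟩ := List.mem_map.1 hx
            exact hβ'nu z (hint _ _ h z hz) (hav _ _ h z hz)
          · obtain ⟨t, ht, rfl⟩ := List.mem_map.1 hx
            refine htripβ' t (fun he => DigonAux.costO_not_self br (mode a) ?_)
            have ht' : t ∈ DigonAux.costO br (mode a) := by
              simpa [DigonAux.costI] using ht
            exact he ▸ ht'
        · rw [if_neg hB] at hx
          obtain ⟨z, hz, rfl⟩ := List.mem_map.1 hx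
          exact hβ'nu z (hint _ _ h z hz) (hav _ _ h z hz)
    · -- internal disjointness
      intro a b h a' b' h' hne' x hx hx'
      dsimp only at hx hx'
      have hchar : ∀ (A B : γ) (H : F.Adj A B) (y : V),
          y ∈ (if A = a₀ then
              (DigonAux.costO br (mode B)).map (DigonAux.vtx u v w) ++ (p A B H).map Subtype.val
            else if B = a₀ then
              (p A B H).map Subtype.val ++ (DigonAux.costI br (mode A)).map (DigonAux.vtx u v w)
            else (p A B H).map Subtype.val) →
          (∃ z ∈ p A B H, y = z.1) ∨
          (∃ c t, t ∈ DigonAux.costO br (mode c) ∧ y = DigonAux.vtx u v w t ∧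
            ((A = a₀ ∧ c = B) ∨ (B = a₀ ∧ c = A))) := by
        intro A B H y hy
        by_cases hA' : A = a₀
        · rw [if_pos hA'] at hy
          rcases List.mem_append.1 hy with hy | hy
          · obtain ⟨t, ht, rfl⟩ := List.mem_map.1 hy
            exact Or.inr ⟨B, t, ht, rfl, Or.inl ⟨hA', rfl⟩⟩
          · obtain ⟨z, hz, hzy⟩ := List.mem_map.1 hy
            exact Or.inl ⟨z, hz, hzy.symm⟩
        · rw [if_neg hA'] at hy
          by_cases hB' : B = a₀
          · rw [if_pos hB'] at hy
            rcases List.mem_append.1 hy with hy | hy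
            · obtain ⟨z, hz, hzy⟩ := List.mem_map.1 hy
              exact Or.inl ⟨z, hz, hzy.symm⟩
            · obtain ⟨t, ht, hty⟩ := List.mem_map.1 hy
              have ht' : t ∈ DigonAux.costO br (mode A) := by
                simpa [DigonAux.costI] using ht
              exact Or.inr ⟨A, t, ht', hty.symm, Or.inr ⟨hB', rfl⟩⟩
          · rw [if_neg hB'] at hy
            obtain ⟨z, hz, hzy⟩ := List.mem_map.1 hy
            exact Or.inl ⟨z, hz, hzy.symm⟩
      have hcmem : ∀ (A B : γ), F.Adj A B → ∀ c : γ, ((A = a₀ ∧ c = B) ∨ (B = a₀ ∧ c = A)) →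
          c ∈ ({w' | F.Adj a₀ w'} ∪ {w' | F.Adj w' a₀} : Set γ) := by
        rintro A B H c (⟨rfl, rfl⟩ | ⟨rfl, rfl⟩)
        · exact Or.inl H
        · exact Or.inr H
      rcases hchar a b h x hx with ⟨z, hz, rfl⟩ | ⟨c, t, ht, rfl, hcase⟩
      · rcases hchar a' b' h' _ hx' with ⟨z', hz', he2⟩ | ⟨c', t', ht', he2, hcase'⟩
        · have hzz : z = z' := hval _ _ he2
          exact hdisj a b h a' b' h' hne' z hz (by rw [hzz]; exact hz')
        · rcases DigonAux.vtx_cases u v w t' with hh | hh | hh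
          · exact hint a b h z hz (he2.trans hh)
          · exact z.2.1 (he2.trans hh)
          · exact z.2.2 (he2.trans hh)
      · rcases hchar a' b' h' _ hx' with ⟨z', hz', he2⟩ | ⟨c', t', ht', he2, hcase'⟩
        · rcases DigonAux.vtx_cases u v w t with hh | hh | hh
          · exact hint a' b' h' z' hz' (he2.symm.trans hh)
          · exact z'.2.1 (he2.symm.trans hh)
          · exact z'.2.2 (he2.symm.trans hh)
        · have httEq : t = t' := hvtxinj he2
          have hccne : c ≠ c' := by
            rintro rfl
            rcases hcase with ⟨hA1, hc1⟩ | ⟨hB1, hc1⟩ <;>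
              rcases hcase' with ⟨hA2, hc2⟩ | ⟨hB2, hc2⟩
            · exact hne' (by rw [hA1, hA2, ← hc1, ← hc2])
            · exact hFd a₀ c ⟨by rw [← hA1, hc1]; exact h, by rw [hc2, ← hB2]; exact h'⟩
            · exact hFd a₀ c ⟨by rw [← hA2, hc2]; exact h', by rw [hc1, ← hB1]; exact h⟩
            · exact hne' (by rw [hB1, hB2, ← hc1, ← hc2])
          exact hmdisj c c' (hcmem a b h c hcase) (hcmem a' b' h' c' hcase') hccne t ht
            (by rw [httEq]; exact ht')
  · -- u is not a branch vertex
    push_neg at hbr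
    by_cases hic : ∃ a, ∃ b, ∃ h : F.Adj a b, ∃ z ∈ p a b h, z.1 = u
    · -- u is an internal vertex of exactly one path
      obtain ⟨a₁, b₁, hab₁, z, hz, hzu⟩ := hic
      obtain ⟨l₁, l₂, hsplit⟩ := List.append_of_mem hz
      have huniq : ∀ a b (h : F.Adj a b), (a, b) ≠ (a₁, b₁) → ∀ z' ∈ p a b h, z'.1 ≠ u := by
        intro a b h hab z' hz' hzu'
        have hz'z : z' = z := hval _ _ (hzu'.trans hzu.symm)
        exact hdisj a b h a₁ b₁ hab₁ hab z' hz' (by rw [hz'z]; exact hz)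
      have hnd₁ := hnd a₁ b₁ hab₁
      rw [hsplit] at hnd₁
      have hshape : (β a₁ :: (l₁ ++ z :: l₂) ++ [β b₁])
          = (β a₁ :: l₁) ++ z :: (l₂ ++ [β b₁]) := by simp
      rw [hshape] at hnd₁
      obtain ⟨hndA, hndZB, hdisjA⟩ := List.nodup_append.1 hnd₁
      obtain ⟨hzB, hndB⟩ := List.nodup_cons.1 hndZB
      have hAne : ∀ y ∈ β a₁ :: l₁, y.1 ≠ u := by
        intro y hy hyu
        have hyz : y = z := hval _ _ (hyu.trans hzu.symm)
        exact hdisjA y hy z List.mem_cons_self hyz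
      have hBne : ∀ y ∈ l₂ ++ [β b₁], y.1 ≠ u := by
        intro y hy hyu
        have hyz : y = z := hval _ _ (hyu.trans hzu.symm)
        exact hzB (by rw [← hyz]; exact hy)
      have hch := hchain a₁ b₁ hab₁
      rw [hsplit, hshape] at hch
      obtain ⟨hcA, hcZB, hlink1⟩ := List.isChain_append.1 hch
      obtain ⟨hlink2, hcB⟩ := List.isChain_cons.1 hcZB
      have hAnn : (β a₁ :: l₁) ≠ [] := by simp
      have hBnn : (l₂ ++ [β b₁]) ≠ [] := by simp
      have hcapI : ∃ t, D.Adj ((β a₁ :: l₁).getLast hAnn).1 (DigonAux.vtx u v w t) := by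
        have hr := hlink1 _ (List.getLast?_eq_getLast hAnn) z rfl
        rcases hr with hd | ⟨hxu, _, _⟩ | ⟨_, _, hd | hd⟩
        · exact ⟨DigonAux.Trip.tu,
            by rw [show DigonAux.vtx u v w DigonAux.Trip.tu = u from rfl, ← hzu]; exact hd⟩
        · exact absurd hxu (hAne _ (List.getLast_mem _))
        · exact ⟨DigonAux.Trip.tv, hd⟩
        · exact ⟨DigonAux.Trip.tw, hd⟩
      have hcapO : ∃ t, D.Adj (DigonAux.vtx u v w t) ((l₂ ++ [β b₁]).head hBnn).1 := by
        have hr := hlink2 _ (List.head?_eq_head hBnn)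
        rcases hr with hd | ⟨_, _, hd | hd⟩ | ⟨hyu, _, _⟩
        · exact ⟨DigonAux.Trip.tu,
            by rw [show DigonAux.vtx u v w DigonAux.Trip.tu = u from rfl, ← hzu]; exact hd⟩
        · exact ⟨DigonAux.Trip.tv, hd⟩
        · exact ⟨DigonAux.Trip.tw, hd⟩
        · exact absurd hyu (hBne _ (List.head_mem _))
      obtain ⟨br, mI, mO, hmI', hmO', hdIO⟩ :=
        DigonAux.feas2
          (fun t => decide (D.Adj ((β a₁ :: l₁).getLast hAnn).1 (DigonAux.vtx u v w t)))
          (fun t => decide (D.Adj (DigonAux.vtx u v w t) ((l₂ ++ [β b₁]).head hBnn).1))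
          (let ⟨t, ht⟩ := hcapI; ⟨t, decide_eq_true ht⟩)
          (let ⟨t, ht⟩ := hcapO; ⟨t, decide_eq_true ht⟩)
      have hmI := of_decide_eq_true hmI'
      have hmO := of_decide_eq_true hmO'
      set M : List V :=
        (DigonAux.costI br mI ++ br :: DigonAux.costO br mO).map (DigonAux.vtx u v w)
        with hMdef
      have hMchain : M.Chain' D.Adj := by
        rw [hMdef]; exact DigonAux.mid_chain D u v w h₁ h₃ h₂ h₄ br mI mO
      have hMnodup : M.Nodup := by
        rw [hMdef]; exact List.Nodup.map hvtxinj (DigonAux.mid_nodup br mI mO hdIO)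
      have hMhd : M.head? = some (DigonAux.vtx u v w mI) := by
        rw [hMdef, List.head?_map, DigonAux.mid_head?]; rfl
      have hMgl : M.getLast? = some (DigonAux.vtx u v w mO) := by
        rw [hMdef, List.getLast?_map, DigonAux.mid_getLast?]; rfl
      have hMmem : ∀ x ∈ M, x = u ∨ x = v ∨ x = w := by
        intro x hx
        rw [hMdef] at hx
        obtain ⟨t, _, rfl⟩ := List.mem_map.1 hx
        exact DigonAux.vtx_cases u v w t
      have hMsep : ∀ l : List {x : V // x ≠ v ∧ x ≠ w}, (∀ y ∈ l, y.1 ≠ u) →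
          ∀ x ∈ M, x ∉ l.map Subtype.val := by
        intro l hl x hx hx'
        obtain ⟨y, hy, hyx⟩ := List.mem_map.1 hx'
        rcases hMmem x hx with rfl | rfl | rfl
        · exact hl y hy hyx
        · exact y.2.1 hyx
        · exact y.2.2 hyx
      refine ⟨fun a => (β a).1, fun a b h =>
          if a = a₁ ∧ b = b₁ then l₁.map Subtype.val ++ M ++ l₂.map Subtype.val
          else (p a b h).map Subtype.val, fun a a' he => hβinj (hval _ _ he), ?_, ?_, ?_⟩
      · -- dipaths
        intro a b h
        dsimp only
        by_cases hsp : a = a₁ ∧ b = b₁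
        · obtain ⟨rfl, rfl⟩ := hsp
          rw [if_pos ⟨rfl, rfl⟩]
          have hLeq : ((β a).1 :: (l₁.map Subtype.val ++ M ++ l₂.map Subtype.val) ++ [(β b).1])
              = ((β a :: l₁).map Subtype.val) ++ (M ++ ((l₂ ++ [β b]).map Subtype.val)) := by
            simp
          constructor
          · rw [hLeq]
            refine List.IsChain.append (hDchain _ hcA hAne)
              (List.IsChain.append hMchain (hDchain _ hcB hBne) ?_) ?_
            · intro x hx y hy
              rw [hMgl] at hx
              simp only [Option.mem_def, Option.some.injEq] at hx
              subst hx
              rw [List.head?_map, List.head?_eq_head hBnn] at hy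
              simp only [Option.map_some, Option.mem_def, Option.some.injEq] at hy
              subst hy
              exact hmO
            · intro x hx y hy
              rw [List.getLast?_map, List.getLast?_eq_getLast hAnn] at hx
              simp only [Option.map_some, Option.mem_def, Option.some.injEq] at hx
              subst hx
              rw [List.head?_append, hMhd] at hy
              simp only [Option.some_or, Option.mem_def, Option.some.injEq] at hy
              subst hy
              exact hmI
          · rw [hLeq]
            refine List.Nodup.append (List.Nodup.map Subtype.val_injective hndA)
              (List.Nodup.append hMnodup (List.Nodup.map Subtype.val_injective hndB)
                (hMsep _ hBne)) ?_
            intro x hxA hxMB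
            rcases List.mem_append.1 hxMB with hxM | hxB
            · exact hMsep _ hAne x hxM hxA
            · obtain ⟨y, hy, hyx⟩ := List.mem_map.1 hxA
              obtain ⟨y', hy', hyx'⟩ := List.mem_map.1 hxB
              have hyy : y = y' := hval _ _ (hyx.trans hyx'.symm)
              exact hdisjA y hy y (List.mem_cons_of_mem _ (by rw [hyy]; exact hy')) rfl
        · rw [if_neg hsp]
          have hall : ∀ y ∈ β a :: p a b h ++ [β b], y.1 ≠ u := by
            intro y hy
            rcases List.mem_cons.1 hy with rfl | hy
            · exact hbr a
            · rcases List.mem_append.1 hy with hy | hy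
              · exact huniq a b h (by simpa [Prod.ext_iff] using hsp) y hy
              · rw [List.mem_singleton] at hy
                subst hy
                exact hbr b
          constructor
          · have hc := hDchain _ (hchain a b h) hall
            simpa using hc
          · simpa using List.Nodup.map Subtype.val_injective (hnd a b h)
      · -- avoidance of branch vertices
        intro a b h x hx
        dsimp only at hx
        by_cases hsp : a = a₁ ∧ b = b₁
        · obtain ⟨rfl, rfl⟩ := hsp
          rw [if_pos ⟨rfl, rfl⟩] at hx
          have hs : p a b h = l₁ ++ z :: l₂ := hsplit
          rintro ⟨c, hc⟩
          rcases List.mem_append.1 hx with hx0 | hxl2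
          · rcases List.mem_append.1 hx0 with hxl1 | hxM
            · obtain ⟨y, hmy, rfl⟩ := List.mem_map.1 hxl1
              exact hav a b h y (by rw [hs]; exact List.mem_append_left _ hmy) ⟨c, hval _ _ hc⟩
            · rcases hMmem x hxM with rfl | rfl | rfl
              · exact hbr c hc
              · exact (β c).2.1 hc
              · exact (β c).2.2 hc
          · obtain ⟨y, hmy, rfl⟩ := List.mem_map.1 hxl2
            exact hav a b h y
              (by rw [hs]; exact List.mem_append_right _ (List.mem_cons_of_mem _ hmy))
              ⟨c, hval _ _ hc⟩
        · rw [if_neg hsp] at hx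
          obtain ⟨y, hy, rfl⟩ := List.mem_map.1 hx
          rintro ⟨c, hc⟩
          exact hav a b h y hy ⟨c, hval _ _ hc⟩
      · -- internal disjointness
        intro a b h a' b' h' hne' x hx hx'
        dsimp only at hx hx'
        have hchar : ∀ A B (H : F.Adj A B) (y : V),
            y ∈ (if A = a₁ ∧ B = b₁ then l₁.map Subtype.val ++ M ++ l₂.map Subtype.val
              else (p A B H).map Subtype.val) →
            (∃ z' ∈ p A B H, y = z'.1) ∨ (y ∈ M ∧ A = a₁ ∧ B = b₁) := by
          intro A B H y hy
          by_cases hq : A = a₁ ∧ B = b₁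
          · obtain ⟨rfl, rfl⟩ := hq
            rw [if_pos ⟨rfl, rfl⟩] at hy
            have hs : p A B H = l₁ ++ z :: l₂ := hsplit
            rcases List.mem_append.1 hy with hy0 | hyl2
            · rcases List.mem_append.1 hy0 with hyl1 | hyM
              · obtain ⟨y', hmy', rfl⟩ := List.mem_map.1 hyl1
                exact Or.inl ⟨y', by rw [hs]; exact List.mem_append_left _ hmy', rfl⟩
              · exact Or.inr ⟨hyM, rfl, rfl⟩
            · obtain ⟨y', hmy', rfl⟩ := List.mem_map.1 hyl2
              exact Or.inl ⟨y',
                by rw [hs]; exact List.mem_append_right _ (List.mem_cons_of_mem _ hmy'), rfl⟩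
          · rw [if_neg hq] at hy
            obtain ⟨y', hy', rfl⟩ := List.mem_map.1 hy
            exact Or.inl ⟨y', hy', rfl⟩
        rcases hchar a b h x hx with ⟨z1, hz1, rfl⟩ | ⟨hxM, hq⟩
        · rcases hchar a' b' h' _ hx' with ⟨z2, hz2, he2⟩ | ⟨hxM', hq'⟩
          · exact hdisj a b h a' b' h' hne' z1 hz1 (by rw [hval _ _ he2]; exact hz2)
          · have habne : (a, b) ≠ (a₁, b₁) := by
              intro hEq
              exact hne' (by rw [hEq, ← hq'.1, ← hq'.2])
            rcases hMmem _ hxM' with hh | hh | hh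
            · exact huniq a b h habne z1 hz1 hh
            · exact z1.2.1 hh
            · exact z1.2.2 hh
        · rcases hchar a' b' h' _ hx' with ⟨z2, hz2, he2⟩ | ⟨hxM', hq'⟩
          · have habne' : (a', b') ≠ (a₁, b₁) := by
              intro hEq
              exact hne' (by rw [hq.1, hq.2, hEq])
            rcases hMmem x hxM with hh | hh | hh
            · exact huniq a' b' h' habne' z2 hz2 (he2.symm.trans hh)
            · exact z2.2.1 (he2.symm.trans hh)
            · exact z2.2.2 (he2.symm.trans hh)
          · exact hne' (by rw [hq.1, hq.2, hq'.1, hq'.2])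
    · -- u does not appear in the subdivision at all
      push_neg at hic
      refine ⟨fun a => (β a).1, fun a b h => (p a b h).map Subtype.val,
        fun a a' he => hβinj (hval _ _ he), ?_, ?_, ?_⟩
      · intro a b h
        have hall : ∀ y ∈ β a :: p a b h ++ [β b], y.1 ≠ u := by
          intro y hy
          rcases List.mem_cons.1 hy with rfl | hy
          · exact hbr a
          · rcases List.mem_append.1 hy with hy | hy
            · exact hic a b h y hy
            · rw [List.mem_singleton] at hy
              subst hy
              exact hbr b
        constructor
        · have hc := hDchain _ (hchain a b h) hall
          simpa using hc
        · simpa using List.Nodup.map Subtype.val_injective (hnd a b h)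
      · intro a b h x hx
        obtain ⟨y, hy, rfl⟩ := List.mem_map.1 hx
        rintro ⟨c, hc⟩
        exact hav a b h y hy ⟨c, hval _ _ hc⟩
      · intro a b h a' b' h' hne' x hx hx'
        obtain ⟨y, hy, rfl⟩ := List.mem_map.1 hx
        obtain ⟨y', hy', hy2⟩ := List.mem_map.1 hx'
        exact hdisj a b h a' b' h' hne' y hy (by rw [hval _ _ hy2.symm]; exact hy')
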